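/- If F*_w(𝒞⁽¹⁾, 𝒞⁽²⁾) = 1 for two nonempty clusterings, then 𝒞⁽¹⁾ = 𝒞⁽²⁾. -/

import Mathlib

open Finset

variable {α : Type*} [DecidableEq α]

/-- Jaccard similarity of two finite sets. -/
noncomputable def jac (A B : Finset α) : ℝ :=
  ((A ∩ B).card : ℝ) / ((A ∪ B).card : ℝ)

/-- Jaccard similarity with the convention `jacc ∅ ∅ = 1`. -/
noncomputable def jacc (A B : Finset α) : ℝ :=
  if A = ∅ ∧ B = ∅ then 1 else jac A B

/-- Best match score of a cluster `A` against a clustering `𝒞` (0 if `𝒞 = ∅`). -/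
noncomputable def bestMatch (A : Finset α) (𝒞 : Finset (Finset α)) : ℝ :=
  if h : 𝒞.Nonempty then 𝒞.sup' h (fun C => jac A C) else 0

/-- Weighted average best-match score `F̂*_w`. -/
noncomputable def fhatw (𝒞 𝒟 : Finset (Finset α)) : ℝ :=
  ∑ C ∈ 𝒞, ((C.card : ℝ) / (∑ C' ∈ 𝒞, (C'.card : ℝ))) * bestMatch C 𝒟

/-- Symmetric score `F*_w`. -/
noncomputable def fw (𝒞 𝒟 : Finset (Finset α)) : ℝ :=
  0.5 * fhatw 𝒞 𝒟 + 0.5 * fhatw 𝒟 𝒞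

/-- Outlier set of a clustering of `X`. -/
def outliers (X : Finset α) (𝒞 : Finset (Finset α)) : Finset α :=
  X \ 𝒞.biUnion id

/-- Outlier-aware one-directional score `F̂*_wo`. -/
noncomputable def fhatwo (X : Finset α) (𝒞 𝒟 : Finset (Finset α)) : ℝ :=
  ((outliers X 𝒞).card : ℝ) / (X.card : ℝ) * jacc (outliers X 𝒞) (outliers X 𝒟)
    + ((X \ outliers X 𝒞).card : ℝ) / (X.card : ℝ) * fhatw 𝒞 𝒟

/-- Outlier-aware symmetric score `F*_wo`. -/
noncomputable def fwo (X : Finset α) (𝒞 𝒟 : Finset (Finset α)) : ℝ :=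
  0.5 * fhatwo X 𝒞 𝒟 + 0.5 * fhatwo X 𝒟 𝒞


lemma jac_le_one' {α : Type*} [DecidableEq α] (A B : Finset α) : jac A B ≤ 1 := by
  unfold jac
  apply div_le_one_of_le₀
  · exact_mod_cast card_le_card (inter_subset_union)
  · positivity

lemma jac_nonneg' {α : Type*} [DecidableEq α] (A B : Finset α) : 0 ≤ jac A B := by
  unfold jac; positivity

lemma jac_eq_one' {α : Type*} [DecidableEq α] {A B : Finset α} (hA : A.Nonempty)
    (h : jac A B = 1) : A = B := by
  have hu : (0:ℝ) < ((A ∪ B).card : ℝ) := by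
    have : (A ∪ B).Nonempty := hA.mono subset_union_left
    exact_mod_cast card_pos.mpr this
  have hcard' : (A ∪ B).card ≤ (A ∩ B).card := by
    unfold jac at h; field_simp at h; exact_mod_cast (le_of_eq (by linarith : ((A ∪ B).card:ℝ) = (A ∩ B).card))
  have heq : A ∩ B = A ∪ B := eq_of_subset_of_card_le inter_subset_union hcard'
  apply Subset.antisymm
  · exact subset_union_left.trans (heq ▸ inter_subset_right)
  · exact subset_union_right.trans (heq ▸ inter_subset_left)

lemma bestMatch_le_one' {α : Type*} [DecidableEq α] (A : Finset α) (𝒟 : Finset (Finset α)) :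
    bestMatch A 𝒟 ≤ 1 := by
  unfold bestMatch
  split
  · exact Finset.sup'_le _ _ fun b _ => jac_le_one' A b
  · norm_num

lemma fhatw_le_one' {α : Type*} [DecidableEq α] (𝒞 𝒟 : Finset (Finset α))
    (hne : 𝒞.Nonempty) (h𝒞 : ∀ C ∈ 𝒞, C.Nonempty) : fhatw 𝒞 𝒟 ≤ 1 := by
  have hS : (0:ℝ) < ∑ C' ∈ 𝒞, (C'.card : ℝ) := by
    apply Finset.sum_pos (fun C hC => ?_) hne
    exact_mod_cast card_pos.mpr (h𝒞 C hC)
  have h1 : fhatw 𝒞 𝒟 ≤ ∑ C ∈ 𝒞, (C.card : ℝ) / (∑ C' ∈ 𝒞, (C'.card : ℝ)) := by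
    apply Finset.sum_le_sum
    intro C hC
    have hw : (0:ℝ) ≤ (C.card : ℝ) / (∑ C' ∈ 𝒞, (C'.card : ℝ)) := by positivity
    calc _ ≤ (C.card : ℝ) / (∑ C' ∈ 𝒞, (C'.card : ℝ)) * 1 :=
          mul_le_mul_of_nonneg_left (bestMatch_le_one' _ _) hw
      _ = _ := mul_one _
  rw [← Finset.sum_div, div_self hS.ne'] at h1
  exact h1

set_option maxHeartbeats 2000000 in
lemma subset_of_fhatw_eq_one {α : Type*} [DecidableEq α] (𝒞 𝒟 : Finset (Finset α))
    (hne : 𝒞.Nonempty) (hne' : 𝒟.Nonempty) (h𝒞 : ∀ C ∈ 𝒞, C.Nonempty)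
    (h : fhatw 𝒞 𝒟 = 1) : 𝒞 ⊆ 𝒟 := by
  have hS : (0:ℝ) < ∑ C' ∈ 𝒞, (C'.card : ℝ) := by
    apply Finset.sum_pos (fun C hC => ?_) hne
    exact_mod_cast card_pos.mpr (h𝒞 C hC)
  set S := ∑ C' ∈ 𝒞, (C'.card : ℝ) with hSdef
  have hsumw : ∑ C ∈ 𝒞, (C.card : ℝ) / S = 1 := by
    rw [← Finset.sum_div, div_self hS.ne']
  have hkey : ∀ C ∈ 𝒞, bestMatch C 𝒟 = 1 := by
    have hz : ∑ C ∈ 𝒞, ((C.card : ℝ) / S) * (1 - bestMatch C 𝒟) = 0 := by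
      have e : ∑ C ∈ 𝒞, ((C.card : ℝ) / S) * (1 - bestMatch C 𝒟)
          = (∑ C ∈ 𝒞, (C.card : ℝ) / S) - fhatw 𝒞 𝒟 := by
        unfold fhatw
        rw [← Finset.sum_sub_distrib]
        exact Finset.sum_congr rfl fun C _ => by ring
      rw [e, hsumw, h]; ring
    rw [Finset.sum_eq_zero_iff_of_nonneg (fun C hC => by
      have := bestMatch_le_one' C 𝒟
      have hw : (0:ℝ) ≤ (C.card : ℝ) / S := by positivity
      exact mul_nonneg hw (by linarith))] at hz
    intro C hC
    have hterm := hz C hC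
    have hw : (0:ℝ) < (C.card : ℝ) / S := by
      apply div_pos _ hS
      exact_mod_cast card_pos.mpr (h𝒞 C hC)
    have := mul_eq_zero.mp hterm
    rcases this with h' | h'
    · exact absurd h' hw.ne'
    · linarith
  intro C hC
  have h1 := hkey C hC
  unfold bestMatch at h1
  rw [dif_pos hne'] at h1
  obtain ⟨D, hD, hDe⟩ := Finset.exists_mem_eq_sup' hne' (fun C' => jac C C')
  rw [hDe] at h1
  have := jac_eq_one' (h𝒞 C hC) h1
  rwa [this]

theorem stmt14 {α : Type*} [DecidableEq α] (𝒞₁ 𝒞₂ : Finset (Finset α))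
    (hne₁ : 𝒞₁.Nonempty) (hne₂ : 𝒞₂.Nonempty)
    (h𝒞₁ : ∀ C ∈ 𝒞₁, C.Nonempty) (h𝒞₂ : ∀ C ∈ 𝒞₂, C.Nonempty)
    (h : fw 𝒞₁ 𝒞₂ = 1) :
    𝒞₁ = 𝒞₂ := by
  have h1 := fhatw_le_one' 𝒞₁ 𝒞₂ hne₁ h𝒞₁
  have h2 := fhatw_le_one' 𝒞₂ 𝒞₁ hne₂ h𝒞₂
  unfold fw at h
  norm_num at h
  have e1 : fhatw 𝒞₁ 𝒞₂ = 1 := by linarith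
  have e2 : fhatw 𝒞₂ 𝒞₁ = 1 := by linarith
  exact Finset.Subset.antisymm (subset_of_fhatw_eq_one _ _ hne₁ hne₂ h𝒞₁ e1)
    (subset_of_fhatw_eq_one _ _ hne₂ hne₁ h𝒞₂ e2)
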